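/- arXiv:2404.18755 — 6 statements merged into one kernel-verified Lean document; each statement's English description precedes it below -/
import Mathlib

section
/- Let R be a social ranking solution satisfying Neutrality (Neu) and Equality of Coalitions (EC). Then for all i, j ∈ N and every coalitional ranking ≿ such that |D_{ij}(≿)| = |D_{ji}(≿)|, it holds that i I^≿ j. -/
/-
Reversing `≿` (to `≿ᵒᵖ`) swaps `D_{ij}` and `D_{ji}`, so Neutrality gives `i R^≿ j ⇔ j R^{≿ᵒᵖ} i`.
By EC, whether `j R^≿ i` holds depends only on `|D_{ij}(≿)|`: two rankings with the same count
are related by a permutation of the coalitions `S ⊆ N \ {i,j}`. As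
`|D_{ij}(≿ᵒᵖ)| = |D_{ji}(≿)| = |D_{ij}(≿)|`, we get `i R^≿ j ⇔ j R^≿ i`, and totality of `R^≿`
yields `i I^≿ j`.
-/

open scoped Classical

noncomputable section

namespace SocialRanking

/-- A coalition: a non-empty subset of the player set `N`. -/
abbrev Coal (N : Type*) : Type _ := {S : Finset N // S.Nonempty}

/-- A coalitional ranking: a total preorder on the non-empty coalitions of `N`. -/
structure CoalRanking (N : Type*) where
  rel : Coal N → Coal N → Prop
  total : ∀ S T, rel S T ∨ rel T S
  trans : ∀ S T U, rel S T → rel T U → rel S U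

variable {N : Type*}

/-- The asymmetric part `≻` of a coalitional ranking. -/
def CoalRanking.strictRel (r : CoalRanking N) (S T : Coal N) : Prop :=
  r.rel S T ∧ ¬ r.rel T S

/-- The symmetric part `∼` of a coalitional ranking. -/
def CoalRanking.simRel (r : CoalRanking N) (S T : Coal N) : Prop :=
  r.rel S T ∧ r.rel T S

/-- A (candidate) social ranking solution: it assigns to every coalitional ranking a
binary relation on the players. -/
abbrev Sol (N : Type*) : Type _ := CoalRanking N → N → N → Prop

/-- A social ranking solution yields a *total* relation on every coalitional ranking. -/
def IsTotalSol (R : Sol N) : Prop := ∀ r i j, R r i j ∨ R r j i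

/-- The asymmetric part `P^≿` of a social ranking. -/
def Psol (R : Sol N) (r : CoalRanking N) (i j : N) : Prop := R r i j ∧ ¬ R r j i

/-- The symmetric part `I^≿` of a social ranking. -/
def Isol (R : Sol N) (r : CoalRanking N) (i j : N) : Prop := R r i j ∧ R r j i

/-- `S` belongs to the worst equivalence class of `r`. -/
def worst (r : CoalRanking N) (S : Coal N) : Prop := ∀ T, r.rel T S

/-- `S` belongs to the best equivalence class of `r`. -/
def best (r : CoalRanking N) (S : Coal N) : Prop := ∀ T, r.rel S T

/-- `S` belongs to the second-worst equivalence class of `r`. -/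
def secondWorst (r : CoalRanking N) (S : Coal N) : Prop :=
  ¬ worst r S ∧ ∀ T, ¬ worst r T → r.rel T S

section Defs

variable [DecidableEq N] [Fintype N]

/-- The coalition `S ∪ {i}`. -/
def ins (i : N) (S : Finset N) : Coal N := ⟨insert i S, Finset.insert_nonempty i S⟩

/-- `D_{ij}(≿)`: the coalitions `S ⊆ N \ {i,j}` with `S ∪ {i} ≻ S ∪ {j}`. -/
def Dset (r : CoalRanking N) (i j : N) : Finset (Finset N) :=
  Finset.univ.filter fun S => i ∉ S ∧ j ∉ S ∧ r.strictRel (ins i S) (ins j S)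

/-- The equivalence class of `S` in `r`. -/
def classOf (r : CoalRanking N) (S : Coal N) : Finset (Coal N) :=
  Finset.univ.filter fun T => r.simRel T S

/-- The (0-indexed) level of `S`: the number of equivalence classes strictly above `S`.
Thus the `k`-th equivalence class `Σ_k` of the quotient order (1-indexed, from best to
worst) is `{S | level r S = k - 1}`. -/
def level (r : CoalRanking N) (S : Coal N) : ℕ :=
  ((Finset.univ.filter fun T => r.strictRel T S).image (classOf r)).card

/-- The number `l` of equivalence classes of `r`. -/
def numClasses (r : CoalRanking N) : ℕ :=
  (Finset.univ.image (classOf r)).card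

/-- `theta r i k` is the number of coalitions containing `i` in the `(k+1)`-st
equivalence class of `r`, i.e. the `(k+1)`-st entry of the vector `θ^≿(i)`. -/
def theta (r : CoalRanking N) (i : N) (k : ℕ) : ℕ :=
  (Finset.univ.filter fun S : Coal N => level r S = k ∧ i ∈ S.1).card

/-- `Mmat r i s k` is the number of coalitions of size `s` containing `i` in the
`(k+1)`-st equivalence class of `r` (the entry `M^{≿,i}_{s,k+1}`). -/
def Mmat (r : CoalRanking N) (i : N) (s k : ℕ) : ℕ :=
  (Finset.univ.filter fun S : Coal N => S.1.card = s ∧ level r S = k ∧ i ∈ S.1).card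

/-- The CP-majority solution: `i R_CP^≿ j ⇔ |D_{ij}(≿)| ≥ |D_{ji}(≿)|`. -/
def cpSol : Sol N := fun r i j => (Dset r j i).card ≤ (Dset r i j).card

/-- The lexicographic excellence (lex-cel) solution: `i R_le^≿ j ⇔ θ^≿(i) ≥_L θ^≿(j)`. -/
def lexcelSol : Sol N := fun r i j =>
  (∀ k, theta r i k = theta r j k) ∨
    ∃ s, (∀ k, k < s → theta r i k = theta r j k) ∧ theta r j s < theta r i s

/-- The dual-lex solution: `i R_d^≿ j ⇔ θ^≿(i) ≥_{L*} θ^≿(j)`. -/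
def duallexSol : Sol N := fun r i j =>
  (∀ k, theta r i k = theta r j k) ∨
    ∃ s, (∀ k, s < k → theta r i k = theta r j k) ∧ theta r i s < theta r j s

/-- The `L⁽¹⁾` solution. -/
def L1Sol : Sol N := fun r i j =>
  (∀ s k, Mmat r i s k = Mmat r j s k) ∨
    ∃ shat khat : ℕ, 1 ≤ shat ∧ shat ≤ Fintype.card N ∧ khat + 1 < numClasses r ∧
      (∀ s k, k < khat → Mmat r i s k = Mmat r j s k) ∧
      (∀ s, s < shat → Mmat r i s khat = Mmat r j s khat) ∧
      Mmat r j shat khat < Mmat r i shat khat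

/-- The `L⁽¹⁾_*` solution. -/
def L1starSol : Sol N := fun r i j =>
  (∀ s k, Mmat r i s k = Mmat r j s k) ∨
    ∃ shat khat : ℕ, 1 ≤ shat ∧ shat ≤ Fintype.card N ∧ 1 ≤ khat ∧ khat < numClasses r ∧
      (∀ s k, khat < k → Mmat r i s k = Mmat r j s k) ∧
      (∀ s, s < shat → Mmat r i s khat = Mmat r j s khat) ∧
      Mmat r i shat khat < Mmat r j shat khat

/-- Strict Desirability (SDes). -/
def SDes (R : Sol N) : Prop :=
  ∀ (r : CoalRanking N) (i j : N),
    (∀ S : Finset N, i ∉ S → j ∉ S → r.rel (ins i S) (ins j S)) →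
    (∃ T : Finset N, i ∉ T ∧ j ∉ T ∧ r.strictRel (ins i T) (ins j T)) →
    Psol R r i j

/-- Symmetry (Sym). -/
def SymAx (R : Sol N) : Prop :=
  ∀ (r : CoalRanking N) (i j : N),
    (∀ S : Finset N, i ∉ S → j ∉ S → r.simRel (ins i S) (ins j S)) →
    Isol R r i j

/-- Neutrality (Neu). -/
def Neu (R : Sol N) : Prop :=
  ∀ (r r' : CoalRanking N) (i j : N),
    (∀ S : Finset N, i ∉ S → j ∉ S →
      (r.rel (ins i S) (ins j S) ↔ r'.rel (ins j S) (ins i S))) →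
    (R r i j ↔ R r' j i)

/-- Equality of Coalitions (EC). -/
def EC (R : Sol N) : Prop :=
  ∀ (r r' : CoalRanking N) (i j : N)
    (π : {S : Finset N // i ∉ S ∧ j ∉ S} ≃ {S : Finset N // i ∉ S ∧ j ∉ S}),
    (∀ S : {S : Finset N // i ∉ S ∧ j ∉ S},
      (r.rel (ins i S.1) (ins j S.1) ↔ r'.rel (ins i (π S).1) (ins j (π S).1))) →
    (R r i j ↔ R r' i j)

/-- Coalitional Anonymity (CA). -/
def CA (R : Sol N) : Prop :=
  ∀ (r r' : CoalRanking N) (i j : N)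
    (π : {S : Finset N // i ∉ S ∧ j ∉ S} ≃ {S : Finset N // i ∉ S ∧ j ∉ S}),
    (∀ S T : {S : Finset N // i ∉ S ∧ j ∉ S},
      (r.rel (ins i S.1) (ins j T.1) ↔ r'.rel (ins i (π S).1) (ins j T.1))) →
    (R r i j ↔ R r' i j)

/-- Per-size Coalitional Anonymity (PCA). -/
def PCA (R : Sol N) : Prop :=
  ∀ (r r' : CoalRanking N) (i j : N)
    (π : {S : Finset N // i ∉ S ∧ j ∉ S} ≃ {S : Finset N // i ∉ S ∧ j ∉ S}),
    (∀ S : {S : Finset N // i ∉ S ∧ j ∉ S}, (π S).1.card = S.1.card) →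
    (∀ S T : {S : Finset N // i ∉ S ∧ j ∉ S}, S.1.card = T.1.card →
      (r.rel (ins i S.1) (ins j T.1) ↔ r'.rel (ins i (π S).1) (ins j T.1))) →
    (R r i j ↔ R r' i j)

/-- Consistency After Tiebreaks (CAT): viewing coalitional rankings as sets of ordered
pairs, `B ⊆ ≿ ∩ ≿'` is removed from both `≿` and `≿'`, the results `rB = ≿ \ B` and
`r'B = ≿' \ B` being again total preorders. -/
def CAT (R : Sol N) : Prop :=
  ∀ (r r' rB r'B : CoalRanking N) (i j : N) (B : Coal N → Coal N → Prop),
    Isol R r i j → Isol R r' i j →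
    (∀ S T, B S T → r.rel S T ∧ r'.rel S T) →
    (∀ S T, rB.rel S T ↔ (r.rel S T ∧ ¬ B S T)) →
    (∀ S T, r'B.rel S T ↔ (r'.rel S T ∧ ¬ B S T)) →
    (R rB i j ↔ R r'B i j)

/-- Independence from the Worst Set (IWS): if `r` has at least two equivalence classes
and `i P^r j`, then `i P^{r'} j` for every coalitional ranking `r'` obtained from `r` by
replacing the worst equivalence class by an ordered partition of it (equivalently, `r'`
agrees with `r` on every pair of coalitions not both in the worst class of `r`). -/
def IWS (R : Sol N) : Prop :=
  ∀ (r r' : CoalRanking N) (i j : N),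
    (∃ S T, r.strictRel S T) →
    Psol R r i j →
    (∀ S T : Coal N, ¬(worst r S ∧ worst r T) → (r.rel S T ↔ r'.rel S T)) →
    Psol R r' i j

/-- Independence from the Best Set (IBS). -/
def IBS (R : Sol N) : Prop :=
  ∀ (r r' : CoalRanking N) (i j : N),
    (∃ S T, r.strictRel S T) →
    Psol R r i j →
    (∀ S T : Coal N, ¬(best r S ∧ best r T) → (r.rel S T ↔ r'.rel S T)) →
    Psol R r' i j

/-- A dichotomous coalitional ranking: exactly two equivalence classes. -/
def dichotomous (r : CoalRanking N) : Prop :=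
  (∃ S T, r.strictRel S T) ∧ ∀ S, best r S ∨ worst r S

/-- `i` `k`-dominates `j` strictly: `i P_k^≿ j`. -/
def kDomS (r : CoalRanking N) (i j : N) (k : ℕ) : Prop :=
  (∀ S : Finset N, i ∉ S → j ∉ S → S.card = k → r.rel (ins i S) (ins j S)) ∧
  ∃ S : Finset N, i ∉ S ∧ j ∉ S ∧ S.card = k ∧ r.strictRel (ins i S) (ins j S)

/-- `i` and `j` are `k`-indifferent: `i I_k^≿ j`. -/
def kIndiff (r : CoalRanking N) (i j : N) (k : ℕ) : Prop :=
  ∀ S : Finset N, i ∉ S → j ∉ S → S.card = k → r.simRel (ins i S) (ins j S)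

/-- `KP_{ij}^≿ = {k ∈ {0,…,n-2} : i P_k^≿ j}`. -/
def KP (r : CoalRanking N) (i j : N) : Finset ℕ :=
  (Finset.range (Fintype.card N - 1)).filter fun k => kDomS r i j k

/-- `k`-Desirability on Dichotomous rankings (k-DD). -/
def kDD (R : Sol N) : Prop :=
  ∀ (r : CoalRanking N) (i j : N),
    dichotomous r →
    (∀ k, k < Fintype.card N - 1 → kDomS r i j k ∨ kDomS r j i k ∨ kIndiff r i j k) →
    ∀ (h1 : (KP r i j).Nonempty) (h2 : (KP r j i).Nonempty),
      (KP r i j).min' h1 < (KP r j i).min' h2 → Psol R r i j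

/-- Consistency after Indifference (CI): `Sig` is a proper subset of the worst class
`Σ_l` of `r` (which has `l ≥ 2` classes) and `i I^r j`; `r'` is the ranking with
quotient order `Σ_1 ≻' … ≻' Σ_{l-1} ∪ Sig ≻' Σ_l \ Sig`, and `r''` the dichotomous
ranking with quotient order `Σ_1 ∪ … ∪ Σ_{l-1} ∪ Sig ≻'' Σ_l \ Sig`. -/
def CI (R : Sol N) : Prop :=
  ∀ (r r' r'' : CoalRanking N) (i j : N) (Sig : Set (Coal N)),
    (∃ S T, r.strictRel S T) →
    Isol R r i j →
    (∀ S ∈ Sig, worst r S) →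
    (∃ S, worst r S ∧ S ∉ Sig) →
    (∀ S T, r'.rel S T ↔
      ((worst r T ∧ T ∉ Sig) ∨
        (¬(worst r S ∧ S ∉ Sig) ∧ (r.rel S T ∨ secondWorst r T ∨ T ∈ Sig)))) →
    (∀ S T, r''.rel S T ↔ ((worst r T ∧ T ∉ Sig) ∨ ¬(worst r S ∧ S ∉ Sig))) →
    (R r' i j ↔ R r'' i j)

/-- `r'` is `i`-improving and `j`-invariant with respect to `r`: the only difference
between the two rankings is that the coalitions in some non-empty family `E` (all
containing `i` but not `j`) are strictly better ranked in `r'` than in `r`, while all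
other coalitions keep their ranking positions. -/
def Improving (r r' : CoalRanking N) (i j : N) : Prop :=
  ∃ E : Set (Coal N), E.Nonempty ∧
    (∀ S ∈ E, i ∈ S.1 ∧ j ∉ S.1) ∧
    (∀ S T : Coal N, S ∉ E → T ∉ E → (r.rel S T ↔ r'.rel S T)) ∧
    (∀ S ∈ E, ∀ T : Coal N, (r.rel S T → r'.rel S T) ∧ (r'.rel T S → r.rel T S)) ∧
    (∀ S ∈ E, ∃ T : Coal N, r.rel T S ∧ ¬ r'.rel T S)

/-- Monotonicity (M). -/
def MonoAx (R : Sol N) : Prop :=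
  ∀ (r r' : CoalRanking N) (i j : N),
    Isol R r i j → Improving r r' i j → Psol R r' i j

end Defs

open Finset
open scoped Pointwise

theorem _root_.Finset.exists_perm_mem_iff_of_card_eq {α : Type*} [DecidableEq α]
    {s t : Finset α} (h : #s = #t) : ∃ π : Equiv.Perm α, ∀ x, x ∈ s ↔ π x ∈ t := by
  have := Set.powersetCard.isPretransitive (α := α) (n := #s)
  obtain ⟨π, hπ⟩ := MulAction.exists_smul_eq (Equiv.Perm α)
    (⟨s, rfl⟩ : Set.powersetCard α #s) ⟨t, h.symm⟩
  have hπst : π • s = t := by simpa only [Set.powersetCard.coe_smul] using congrArg Subtype.val hπ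
  refine ⟨π, fun x => ?_⟩
  rw [← Finset.smul_mem_smul_finset_iff π, hπst]
  rfl

def CoalRanking.dual (r : CoalRanking N) : CoalRanking N where
  rel S T := r.rel T S
  total S T := r.total T S
  trans S T U hST hTU := r.trans U T S hTU hST

theorem Neu.iff_dual [DecidableEq N] {R : Sol N} (hNeu : Neu R) (r : CoalRanking N) (i j : N) :
    R r i j ↔ R r.dual j i :=
  hNeu r r.dual i j fun _ _ _ => Iff.rfl

section Dset

variable [DecidableEq N] [Fintype N]

theorem Dset_dual (r : CoalRanking N) (i j : N) : Dset r.dual i j = Dset r j i := by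
  ext S
  simp only [Dset, mem_filter, mem_univ, true_and]
  exact and_left_comm

theorem rel_ins_iff_notMem_Dset (r : CoalRanking N) {i j : N} {S : Finset N}
    (hi : i ∉ S) (hj : j ∉ S) : r.rel (ins i S) (ins j S) ↔ S ∉ Dset r j i := by
  rw [Dset, mem_filter]
  simp only [CoalRanking.strictRel, mem_univ, hi, hj, not_false_eq_true, true_and, not_and, not_not]
  exact ⟨fun h _ => h, fun h => (r.total _ _).elim id h⟩

theorem card_Dset_subtype (r : CoalRanking N) (i j : N) :
    #((Dset r j i).subtype fun S => i ∉ S ∧ j ∉ S) = #(Dset r j i) := by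
  rw [card_subtype, filter_true_of_mem]
  intro S hS
  simp only [Dset, mem_filter] at hS
  exact ⟨hS.2.2.1, hS.2.1⟩

theorem EC.iff_of_card_Dset_eq {R : Sol N} (hEC : EC R) {r r' : CoalRanking N} {i j : N}
    (h : #(Dset r j i) = #(Dset r' j i)) : R r i j ↔ R r' i j := by
  obtain ⟨π, hπ⟩ := exists_perm_mem_iff_of_card_eq
    ((card_Dset_subtype r i j).trans (h.trans (card_Dset_subtype r' i j).symm))
  refine hEC r r' i j π fun S => ?_
  rw [rel_ins_iff_notMem_Dset r S.2.1 S.2.2, rel_ins_iff_notMem_Dset r' (π S).2.1 (π S).2.2]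
  simpa only [mem_subtype] using (hπ S).not

/-- if a social ranking solution `R` satisfies Neutrality and Equality of
Coalitions, then `|D_{ij}(≿)| = |D_{ji}(≿)|` implies `i I^≿ j`. -/
theorem stmt0 (R : Sol N) (hTot : IsTotalSol R) (hNeu : Neu R) (hEC : EC R)
    (r : CoalRanking N) (i j : N) (h : (Dset r i j).card = (Dset r j i).card) :
    Isol R r i j := by
  have hsymm : R r i j ↔ R r j i :=
    (hNeu.iff_dual r i j).trans (hEC.iff_of_card_Dset_eq (by rw [Dset_dual, h]))
  rcases hTot r i j with hij | hji
  · exact ⟨hij, hsymm.mp hij⟩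
  · exact ⟨hsymm.mpr hji, hji⟩

end Dset

end SocialRanking
end
end

section
/- Let R be a social ranking solution satisfying Symmetry (Sym) and Coalitional Anonymity (CA). Then for all i, j ∈ N and every coalitional ranking ≿ such that θ^≿(i) = θ^≿(j), it holds that i I^≿ j. -/
open scoped Classical

noncomputable section

namespace SocialRanking

variable {N : Type*}

/-! If `θ(i) = θ(j)`, then for every level `k` there are as many coalitions at level `k`
containing `i` but not `j` as containing `j` but not `i`. Hence there is a permutation `π`
of the coalitions `S ⊆ N \ {i, j}` such that `S ∪ {i}` sits at the level of `π S ∪ {j}`.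
Let `≿'` be the ranking in which every `S ∪ {i}` is moved to the level of `S ∪ {j}` and all
other coalitions stay put. By Symmetry `i I^≿' j`, and `π` carries the comparisons between
`i`-coalitions and `j`-coalitions of `≿` to those of `≿'`, so Coalitional Anonymity transfers
`i R j` from `≿'` back to `≿`. Exchanging `i` and `j` gives `j R i`. -/

theorem CoalRanking.rel_refl (r : CoalRanking N) (S : Coal N) : r.rel S S :=
  (r.total S S).elim id id

def CoalRanking.ofRank {α : Type*} [LinearOrder α] (f : Coal N → α) : CoalRanking N where
  rel S T := f S ≤ f T
  total _ _ := le_total _ _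
  trans _ _ _ := le_trans

theorem exists_equiv_comp_eq_of_card_fiber_eq {α β γ : Type*} [Fintype α] [Fintype β]
    [DecidableEq γ] (a : α → γ) (b : β → γ)
    (h : ∀ k, Fintype.card {x // a x = k} = Fintype.card {y // b y = k}) :
    ∃ e : α ≃ β, ∀ x, b (e x) = a x :=
  ⟨Equiv.ofFiberEquiv fun k => Fintype.equivOfCardEq (h k), Equiv.ofFiberEquiv_map _⟩

theorem filter_strictRel_subset_of_rel [Fintype N] (r : CoalRanking N) {A B : Coal N}
    (hAB : r.rel A B) :
    (Finset.univ.filter fun T => r.strictRel T A) ⊆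
      Finset.univ.filter fun T => r.strictRel T B := by
  intro T hT
  rw [Finset.mem_filter] at hT ⊢
  exact ⟨Finset.mem_univ T, r.trans _ _ _ hT.2.1 hAB,
    fun hBT => hT.2.2 (r.trans _ _ _ hAB hBT)⟩

section Defs

variable [DecidableEq N] [Fintype N]

open Finset

theorem level_le_level_of_rel (r : CoalRanking N) {A B : Coal N} (hAB : r.rel A B) :
    level r A ≤ level r B :=
  card_le_card (image_subset_image (filter_strictRel_subset_of_rel r hAB))

theorem level_lt_level_of_strictRel (r : CoalRanking N) {A B : Coal N}
    (hAB : r.strictRel A B) : level r A < level r B := by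
  refine card_lt_card ((ssubset_iff_of_subset
    (image_subset_image (filter_strictRel_subset_of_rel r hAB.1))).2
    ⟨classOf r A, mem_image_of_mem _ (mem_filter.2 ⟨mem_univ A, hAB⟩), fun hA => ?_⟩)
  obtain ⟨T, hT, hTA⟩ := mem_image.1 hA
  have hAT : r.simRel A T := by
    have hmem : A ∈ classOf r T := hTA ▸ mem_filter.2 ⟨mem_univ _, r.rel_refl A, r.rel_refl A⟩
    exact (mem_filter.1 hmem).2
  exact (mem_filter.1 hT).2.2 hAT.1

theorem rel_iff_level_le (r : CoalRanking N) (A B : Coal N) :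
    r.rel A B ↔ level r A ≤ level r B := by
  refine ⟨level_le_level_of_rel r, fun hle => ?_⟩
  by_contra hAB
  exact (level_lt_level_of_strictRel r ⟨(r.total A B).resolve_left hAB, hAB⟩).not_ge hle

abbrev Outside (i j : N) : Type _ := {S : Finset N // i ∉ S ∧ j ∉ S}

def Outside.comm (i j : N) : Outside i j ≃ Outside j i :=
  Equiv.subtypeEquivRight fun _ => and_comm

def insEquiv {i j : N} (hij : i ≠ j) : Outside i j ≃ {C : Coal N // i ∈ C.1 ∧ j ∉ C.1} where
  toFun S := ⟨ins i S.1, mem_insert_self i S.1, by simp [ins, hij.symm, S.2.2]⟩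
  invFun C := ⟨C.1.1.erase i, notMem_erase i _, fun h => C.2.2 (mem_of_mem_erase h)⟩
  left_inv S := Subtype.ext (erase_insert S.2.1)
  right_inv C := Subtype.ext (Subtype.ext (insert_erase C.2.1))

theorem card_fiber_level_ins (r : CoalRanking N) {i j : N} (hij : i ≠ j) (k : ℕ) :
    Fintype.card {S : Outside i j // level r (ins i S.1) = k} =
      #{C : Coal N | level r C = k ∧ i ∈ C.1 ∧ j ∉ C.1} := by
  rw [← Fintype.card_subtype]
  exact Fintype.card_congr (((insEquiv hij).subtypeEquiv fun _ => Iff.rfl).trans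
    ((Equiv.subtypeSubtypeEquivSubtypeInter _ (fun C => level r C = k)).trans
      (Equiv.subtypeEquivRight fun _ => by tauto)))

theorem theta_eq_card_add_card (r : CoalRanking N) (i j : N) (k : ℕ) :
    theta r i k = #{C : Coal N | level r C = k ∧ i ∈ C.1 ∧ j ∈ C.1} +
      #{C : Coal N | level r C = k ∧ i ∈ C.1 ∧ j ∉ C.1} := by
  rw [theta, ← card_filter_add_card_filter_not (p := fun C : Coal N => j ∈ C.1),
    filter_filter, filter_filter]
  simp only [and_assoc]

theorem card_level_mem_notMem_eq_of_theta_eq (r : CoalRanking N) {i j : N} {k : ℕ}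
    (h : theta r i k = theta r j k) :
    #{C : Coal N | level r C = k ∧ i ∈ C.1 ∧ j ∉ C.1} =
      #{C : Coal N | level r C = k ∧ j ∈ C.1 ∧ i ∉ C.1} := by
  have hshared : #{C : Coal N | level r C = k ∧ i ∈ C.1 ∧ j ∈ C.1} =
      #{C : Coal N | level r C = k ∧ j ∈ C.1 ∧ i ∈ C.1} := by
    simp only [and_comm (a := i ∈ _)]
  have := theta_eq_card_add_card r i j k
  have := theta_eq_card_add_card r j i k
  omega

theorem exists_equiv_level_ins_eq (r : CoalRanking N) {i j : N} (hij : i ≠ j)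
    (h : ∀ k, theta r i k = theta r j k) :
    ∃ π : Outside i j ≃ Outside i j, ∀ S, level r (ins j (π S).1) = level r (ins i S.1) := by
  refine exists_equiv_comp_eq_of_card_fiber_eq (fun S : Outside i j => level r (ins i S.1))
    (fun S : Outside i j => level r (ins j S.1)) fun k => ?_
  have hswap : Fintype.card {S : Outside i j // level r (ins j S.1) = k} =
      Fintype.card {S : Outside j i // level r (ins j S.1) = k} :=
    Fintype.card_congr ((Outside.comm i j).subtypeEquiv fun S => by rfl)
  rw [hswap, card_fiber_level_ins r hij, card_fiber_level_ins r hij.symm]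
  exact card_level_mem_notMem_eq_of_theta_eq r (h k)

/-- The level in the ranking where every `S ∪ {i}` with `S ⊆ N \ {i, j}` is moved to the
level of `S ∪ {j}`. -/
def partnerLevel (r : CoalRanking N) (i j : N) (C : Coal N) : ℕ :=
  if i ∈ C.1 ∧ j ∉ C.1 then level r (ins j (C.1.erase i)) else level r C

theorem partnerLevel_ins_left (r : CoalRanking N) {i j : N} (hij : i ≠ j) {S : Finset N}
    (hi : i ∉ S) (hj : j ∉ S) : partnerLevel r i j (ins i S) = level r (ins j S) := by
  rw [partnerLevel, if_pos ⟨mem_insert_self i S, by simp [ins, hij.symm, hj]⟩]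
  simp only [ins, erase_insert hi]

theorem partnerLevel_ins_right (r : CoalRanking N) (i j : N) (S : Finset N) :
    partnerLevel r i j (ins j S) = level r (ins j S) :=
  if_neg fun h => h.2 (mem_insert_self j S)

theorem isol_ofRank_partnerLevel {R : Sol N} (hSym : SymAx R) (r : CoalRanking N) {i j : N}
    (hij : i ≠ j) : Isol R (CoalRanking.ofRank (partnerLevel r i j)) i j :=
  hSym _ i j fun S hi hj => by
    simp only [CoalRanking.simRel, CoalRanking.ofRank, partnerLevel_ins_left r hij hi hj,
      partnerLevel_ins_right, le_refl, and_self]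

theorem sol_iff_sol_ofRank_partnerLevel {R : Sol N} (hCA : CA R) (r : CoalRanking N)
    {i j : N} (hij : i ≠ j) (π : Outside i j ≃ Outside i j)
    (hπ : ∀ S, level r (ins j (π S).1) = level r (ins i S.1)) :
    R r i j ↔ R (CoalRanking.ofRank (partnerLevel r i j)) i j :=
  hCA r _ i j π fun S T => by
    rw [rel_iff_level_le, ← hπ S]
    exact (congrArg₂ (· ≤ ·) (partnerLevel_ins_left r hij (π S).2.1 (π S).2.2)
      (partnerLevel_ins_right r i j T.1)).symm.to_iff

theorem sol_of_theta_eq {R : Sol N} (hSym : SymAx R) (hCA : CA R) (r : CoalRanking N)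
    {i j : N} (hij : i ≠ j) (h : ∀ k, theta r i k = theta r j k) : R r i j := by
  obtain ⟨π, hπ⟩ := exists_equiv_level_ins_eq r hij h
  exact (sol_iff_sol_ofRank_partnerLevel hCA r hij π hπ).2 (isol_ofRank_partnerLevel hSym r hij).1

theorem stmt2_general (R : Sol N) (hSym : SymAx R) (hCA : CA R)
    (r : CoalRanking N) (i j : N) (h : ∀ k, theta r i k = theta r j k) :
    Isol R r i j := by
  by_cases hij : i = j
  · subst hij
    exact hSym r i i fun S _ _ => ⟨r.rel_refl _, r.rel_refl _⟩
  exact ⟨sol_of_theta_eq hSym hCA r hij h,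
    sol_of_theta_eq hSym hCA r (Ne.symm hij) fun k => (h k).symm⟩

/-- if a social ranking solution `R` satisfies Symmetry and Coalitional
Anonymity, then `θ^≿(i) = θ^≿(j)` implies `i I^≿ j`. -/
theorem stmt2 (R : Sol N) (hTot : IsTotalSol R) (hSym : SymAx R) (hCA : CA R)
    (r : CoalRanking N) (i j : N) (h : ∀ k, theta r i k = theta r j k) :
    Isol R r i j :=
  stmt2_general R hSym hCA r i j h

end Defs

end SocialRanking
end
end

section
/- Every social ranking solution satisfying Neutrality (Neu) also satisfies Symmetry (Sym); moreover, if |N| ≥ 2, there exists a social ranking solution that satisfies Symmetry (Sym) but not Neutrality (Neu). -/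
/-!
Applying Neutrality to a ranking and itself shows that, when `i` and `j` are symmetric, `i R j`
and `j R i` are equivalent, so totality forces indifference. Conversely, Symmetry only constrains
symmetric pairs of players, so a solution may single out an ordered pair `(a, b)`: ranking `b`
strictly above `a` exactly when `{a} ≻ {b}` and declaring everything else indifferent satisfies
Symmetry, while Neutrality fails on the all-indifferent ranking and the ranking with `{a}` alone
on top, which reverse each other on `b` versus `a`.
-/

open scoped Classical

noncomputable section

namespace SocialRanking

variable {N : Type*}

namespace CoalRanking

def indiff : CoalRanking N where
  rel _ _ := True
  total _ _ := Or.inl trivial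
  trans _ _ _ _ _ := trivial

def uniqueBest (S₀ : Coal N) : CoalRanking N where
  rel S T := T = S₀ → S = S₀
  total S T := by
    by_cases h : S = S₀
    · exact Or.inl fun _ => h
    · exact Or.inr fun hS => absurd hS h
  trans _ _ _ hST hTU hU := hST (hTU hU)

theorem uniqueBest_rel_of_ne {S₀ T : Coal N} (S : Coal N) (hT : T ≠ S₀) :
    (uniqueBest S₀).rel S T :=
  fun h => absurd h hT

theorem uniqueBest_strictRel_of_ne {S₀ T : Coal N} (hT : T ≠ S₀) :
    (uniqueBest S₀).strictRel S₀ T :=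
  ⟨fun _ => rfl, fun h => hT (h rfl)⟩

end CoalRanking

section

variable [DecidableEq N]

theorem eq_of_ins_eq_ins_empty {i j : N} {S : Finset N} (h : ins i S = ins j ∅) : i = j := by
  have hi : i ∈ (ins j (∅ : Finset N)).1 := h ▸ Finset.mem_insert_self i S
  simpa [ins] using hi

theorem Neu.symAx {R : Sol N} (hN : Neu R) (hT : IsTotalSol R) : SymAx R := by
  intro r i j h
  have hswap : R r i j ↔ R r j i :=
    hN r r i j fun S hi hj => ⟨fun _ => (h S hi hj).2, fun _ => (h S hi hj).1⟩
  rcases hT r i j with hij | hji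
  · exact ⟨hij, hswap.mp hij⟩
  · exact ⟨hswap.mpr hji, hji⟩

def reversedPairSol (a b : N) : Sol N := fun r i j =>
  ¬ (i = a ∧ j = b ∧ r.strictRel (ins a ∅) (ins b ∅))

theorem isTotalSol_reversedPairSol {a b : N} (hab : a ≠ b) :
    IsTotalSol (reversedPairSol a b) := by
  intro r i j
  by_cases h : i = a ∧ j = b ∧ r.strictRel (ins a ∅) (ins b ∅)
  · exact Or.inr fun ⟨hja, _⟩ => hab (hja.symm.trans h.2.1)
  · exact Or.inl h

theorem symAx_reversedPairSol (a b : N) : SymAx (reversedPairSol a b) := by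
  intro r i j h
  have hsim := h ∅ (Finset.notMem_empty i) (Finset.notMem_empty j)
  constructor
  · rintro ⟨rfl, rfl, hs⟩
    exact hs.2 hsim.2
  · rintro ⟨rfl, rfl, hs⟩
    exact hs.2 hsim.1

theorem not_neu_reversedPairSol {a b : N} (hab : a ≠ b) : ¬ Neu (reversedPairSol a b) := by
  intro hN
  have hba (S : Finset N) : ins b S ≠ ins a ∅ := fun h => hab (eq_of_ins_eq_ins_empty h).symm
  have hswap := hN CoalRanking.indiff (CoalRanking.uniqueBest (ins a ∅)) b a fun S _ _ =>
    iff_of_true trivial (CoalRanking.uniqueBest_rel_of_ne _ (hba S))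
  exact hswap.mp (fun h => hab h.1.symm) ⟨rfl, rfl, CoalRanking.uniqueBest_strictRel_of_ne (hba ∅)⟩

variable [Fintype N]

/-- every social ranking solution satisfying Neutrality also satisfies
Symmetry; moreover, if `|N| ≥ 2`, some social ranking solution satisfies Symmetry but
not Neutrality. -/
theorem stmt8 :
    (∀ R : Sol N, IsTotalSol R → Neu R → SymAx R) ∧
      (2 ≤ Fintype.card N → ∃ R : Sol N, IsTotalSol R ∧ SymAx R ∧ ¬ Neu R) := by
  refine ⟨fun R hT hN => hN.symAx hT, fun hcard => ?_⟩
  obtain ⟨a, b, hab⟩ := Fintype.exists_pair_of_one_lt_card hcard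
  exact ⟨reversedPairSol a b, isTotalSol_reversedPairSol hab, symAx_reversedPairSol a b,
    not_neu_reversedPairSol hab⟩

end

end SocialRanking
end
end

section
/- If |N| ≥ 3, there exists a social ranking solution that satisfies Strict Desirability (SDes) and Symmetry (Sym) but does not satisfy Monotonicity (M). -/
/-!
The CP-majority solution ranks `i` above `j` when at least as many coalitions `S ⊆ N \ {i, j}`
satisfy `S ∪ {i} ≻ S ∪ {j}` as the reverse; SDes and Sym hold because under their hypotheses
one of the two counts is zero. Monotonicity fails because lifting a coalition need not change
any of these pairwise comparisons. With `{a} ∼ {b, c}` on top and all other coalitions tied at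
the bottom, `a` and `b` each win exactly one comparison (`{a} ≻ {b}` and `{b, c} ≻ {a, c}`), and
lifting `{a}` strictly above `{b, c}` leaves both counts at one.
-/

open scoped Classical

noncomputable section

namespace SocialRanking

variable {N : Type*}

theorem _root_.Finset.eq_of_insert_eq_insert {α : Type*} [DecidableEq α] {a : α} {s t : Finset α}
    (hs : a ∉ s) (ht : a ∉ t) (h : insert a s = insert a t) : s = t := by
  rw [← Finset.erase_insert hs, h, Finset.erase_insert ht]

def rankOf (u : Coal N → ℕ) : CoalRanking N where
  rel S T := u T ≤ u S
  total S T := le_total (u T) (u S)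
  trans _ _ _ hST hTU := hTU.trans hST

@[simp]
theorem rankOf_rel (u : Coal N → ℕ) (S T : Coal N) : (rankOf u).rel S T ↔ u T ≤ u S :=
  Iff.rfl

@[simp]
theorem rankOf_strictRel (u : Coal N → ℕ) (S T : Coal N) :
    (rankOf u).strictRel S T ↔ u T < u S :=
  lt_iff_le_not_ge.symm

theorem improving_rankOf {u u' : Coal N → ℕ} {i j : N} {S₀ T₀ : Coal N}
    (hi : i ∈ S₀.1) (hj : j ∉ S₀.1) (hu : ∀ S, S ≠ S₀ → u' S = u S)
    (hle : u S₀ ≤ u T₀) (hlt : u' T₀ < u' S₀) : Improving (rankOf u) (rankOf u') i j := by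
  have hT₀ : T₀ ≠ S₀ := by rintro rfl; exact hlt.false
  have hS₀ : u S₀ < u' S₀ := (hu T₀ hT₀ ▸ hle).trans_lt hlt
  refine ⟨{S₀}, Set.singleton_nonempty S₀, fun S hS => hS ▸ ⟨hi, hj⟩, ?_, ?_, ?_⟩
  · intro S T hS hT
    simp only [rankOf_rel, hu S hS, hu T hT]
  · rintro S rfl T
    by_cases hT : T = S
    · subst hT; simp
    · simp only [rankOf_rel, hu T hT]
      omega
  · rintro S rfl
    exact ⟨T₀, hle, by simpa [hu T₀ hT₀] using hlt⟩

section CPMajority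

variable [DecidableEq N] {a b c : N} {v : ℕ} {S : Finset N}

def pairUtility (a b c : N) (v : ℕ) (S : Coal N) : ℕ :=
  if S.1 = {a} then v else if S.1 = {b, c} then 1 else 0

theorem pairUtility_ins_left (hab : a ≠ b) (hac : a ≠ c) (ha : a ∉ S) :
    pairUtility a b c v (ins a S) = if S = ∅ then v else 0 := by
  have hsingleton : insert a S = {a} ↔ S = ∅ :=
    ⟨Finset.eq_of_insert_eq_insert ha (Finset.notMem_empty a), fun h => h ▸ rfl⟩
  have hpair : insert a S ≠ {b, c} := fun h => by
    have := h ▸ Finset.mem_insert_self a S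
    simp [hab, hac] at this
  simp only [pairUtility, ins, hsingleton, hpair, if_false]

theorem pairUtility_ins_mid (hab : a ≠ b) (hbc : b ≠ c) (hb : b ∉ S) :
    pairUtility a b c v (ins b S) = if S = {c} then 1 else 0 := by
  have hsingleton : insert b S ≠ {a} := fun h => by
    have := h ▸ Finset.mem_insert_self b S
    simp [hab.symm] at this
  have hpair : insert b S = {b, c} ↔ S = {c} :=
    ⟨Finset.eq_of_insert_eq_insert hb (by simpa using hbc), fun h => h ▸ rfl⟩
  simp only [pairUtility, ins, hsingleton, hpair, if_false]

theorem improving_pairUtility (hab : a ≠ b) (hac : a ≠ c) (hbc : b ≠ c) :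
    Improving (rankOf (pairUtility a b c 1)) (rankOf (pairUtility a b c 2)) a b := by
  have ha : a ∉ ({c} : Finset N) := by simpa using hac
  have hb : b ∉ ({c} : Finset N) := by simpa using hbc
  refine improving_rankOf (S₀ := ins a ∅) (T₀ := ins b {c}) (Finset.mem_insert_self a ∅)
    (by simpa [ins] using hab.symm) (fun S hS => ?_) ?_ ?_
  · have : S.1 ≠ {a} := fun h => hS (Subtype.ext (h.trans Finset.insert_empty.symm))
    simp only [pairUtility, this, if_false]
  · rw [pairUtility_ins_left hab hac (Finset.notMem_empty a), pairUtility_ins_mid hab hbc hb]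
    simp
  · rw [pairUtility_ins_left hab hac (Finset.notMem_empty a), pairUtility_ins_mid hab hbc hb]
    simp

variable [Fintype N]

theorem mem_Dset {r : CoalRanking N} {i j : N} :
    S ∈ Dset r i j ↔ i ∉ S ∧ j ∉ S ∧ r.strictRel (ins i S) (ins j S) := by
  simp [Dset]

theorem Dset_eq_empty_of_forall_rel {r : CoalRanking N} {i j : N}
    (h : ∀ S : Finset N, i ∉ S → j ∉ S → r.rel (ins i S) (ins j S)) : Dset r j i = ∅ :=
  Finset.eq_empty_of_forall_notMem fun _ hS =>
    let ⟨hj, hi, hji⟩ := mem_Dset.mp hS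
    hji.2 (h _ hi hj)

theorem cpSol_psol_iff {r : CoalRanking N} {i j : N} :
    Psol cpSol r i j ↔ (Dset r j i).card < (Dset r i j).card :=
  lt_iff_le_not_ge.symm

theorem cpSol_isol_iff {r : CoalRanking N} {i j : N} :
    Isol cpSol r i j ↔ (Dset r j i).card = (Dset r i j).card :=
  le_antisymm_iff.symm

theorem isTotalSol_cpSol : IsTotalSol (cpSol : Sol N) :=
  fun _ _ _ => le_total _ _

theorem sDes_cpSol : SDes (cpSol : Sol N) := by
  rintro r i j hrel ⟨T, hi, hj, hT⟩
  rw [cpSol_psol_iff, Dset_eq_empty_of_forall_rel hrel, Finset.card_empty, Finset.card_pos]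
  exact ⟨T, mem_Dset.mpr ⟨hi, hj, hT⟩⟩

theorem symAx_cpSol : SymAx (cpSol : Sol N) := by
  intro r i j hsim
  rw [cpSol_isol_iff, Dset_eq_empty_of_forall_rel fun S hi hj => (hsim S hi hj).1,
    Dset_eq_empty_of_forall_rel fun S hj hi => (hsim S hi hj).2]

theorem Dset_pairUtility_left (hab : a ≠ b) (hac : a ≠ c) (hbc : b ≠ c) (hv : 0 < v) :
    Dset (rankOf (pairUtility a b c v)) a b = {∅} := by
  ext S
  simp only [mem_Dset, rankOf_strictRel, Finset.mem_singleton]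
  constructor
  · rintro ⟨ha, hb, hlt⟩
    rw [pairUtility_ins_left hab hac ha, pairUtility_ins_mid hab hbc hb] at hlt
    by_contra hS
    simp [hS] at hlt
  · rintro rfl
    refine ⟨Finset.notMem_empty a, Finset.notMem_empty b, ?_⟩
    rw [pairUtility_ins_left hab hac (Finset.notMem_empty a),
      pairUtility_ins_mid hab hbc (Finset.notMem_empty b)]
    simpa using hv

theorem Dset_pairUtility_right (hab : a ≠ b) (hac : a ≠ c) (hbc : b ≠ c) :
    Dset (rankOf (pairUtility a b c v)) b a = {{c}} := by
  ext S
  simp only [mem_Dset, rankOf_strictRel, Finset.mem_singleton]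
  constructor
  · rintro ⟨hb, ha, hlt⟩
    rw [pairUtility_ins_left hab hac ha, pairUtility_ins_mid hab hbc hb] at hlt
    by_contra hS
    simp [hS] at hlt
  · rintro rfl
    have ha : a ∉ ({c} : Finset N) := by simpa using hac
    have hb : b ∉ ({c} : Finset N) := by simpa using hbc
    refine ⟨hb, ha, ?_⟩
    rw [pairUtility_ins_left hab hac ha, pairUtility_ins_mid hab hbc hb]
    simp

theorem isol_cpSol_pairUtility (hab : a ≠ b) (hac : a ≠ c) (hbc : b ≠ c) (hv : 0 < v) :
    Isol cpSol (rankOf (pairUtility a b c v)) a b := by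
  rw [cpSol_isol_iff, Dset_pairUtility_left hab hac hbc hv, Dset_pairUtility_right hab hac hbc,
    Finset.card_singleton, Finset.card_singleton]

theorem not_monoAx_cpSol (hab : a ≠ b) (hac : a ≠ c) (hbc : b ≠ c) :
    ¬ MonoAx (cpSol : Sol N) := fun hM =>
  (hM _ _ a b (isol_cpSol_pairUtility hab hac hbc one_pos)
    (improving_pairUtility hab hac hbc)).2
    (isol_cpSol_pairUtility hab hac hbc two_pos).2

/-- if `|N| ≥ 3`, there exists a social ranking solution satisfying SDes
and Sym but not Monotonicity. -/
theorem stmt12 (h : 3 ≤ Fintype.card N) :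
    ∃ R : Sol N, IsTotalSol R ∧ SDes R ∧ SymAx R ∧ ¬ MonoAx R := by
  obtain ⟨a, b, c, hab, hac, hbc⟩ := Fintype.two_lt_card_iff.mp h
  exact ⟨cpSol, isTotalSol_cpSol, sDes_cpSol, symAx_cpSol, not_monoAx_cpSol hab hac hbc⟩

end CPMajority

end SocialRanking
end
end

section
/- If |N| ≥ 3, none of the CP-majority R_CP, the dual-lex R_d and the L^{(1)}_* solution satisfies Independence from the Worst Set (IWS). -/
open scoped Classical

noncomputable section

namespace SocialRanking

variable {N : Type*}

/-! Take distinct players `i, j, k` and let `r` put `{i}` alone on top and tie all other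
coalitions at the bottom. Then `{i} ≻ {j}` is the only strict comparison between some `S ∪ {i}`
and `S ∪ {j}`, and `i` lies in one coalition fewer than `j` in the bottom class (the singleton
`{i}` is the missing one), so all three solutions rank `i` strictly above `j`. Splitting the bottom
class of `r` into the coalitions containing `j` followed by the others leaves a worst class that
contains `{i, k}` but no coalition containing `j`, which puts `j` ahead of `i` for dual-lex and
`L⁽¹⁾_*`; for CP-majority the new comparison `{j, k} ≻ {i, k}` balances `{i} ≻ {j}`. -/

namespace CoalRanking

def ofRank_s16 (f : Coal N → ℕ) : CoalRanking N where
  rel S T := f S ≤ f T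
  total _ _ := le_total _ _
  trans _ _ _ := le_trans

@[simp]
lemma ofRank_rel (f : Coal N → ℕ) (S T : Coal N) : (ofRank_s16 f).rel S T ↔ f S ≤ f T :=
  Iff.rfl

@[simp]
lemma ofRank_strictRel (f : Coal N → ℕ) (S T : Coal N) :
    (ofRank_s16 f).strictRel S T ↔ f S < f T :=
  lt_iff_le_not_ge.symm

@[simp]
lemma ofRank_simRel (f : Coal N → ℕ) (S T : Coal N) :
    (ofRank_s16 f).simRel S T ↔ f S = f T :=
  le_antisymm_iff.symm

end CoalRanking

open CoalRanking

lemma not_IWS_of_reversal {R : Sol N} {r r' : CoalRanking N} {i j : N}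
    (hr : ∃ S T, r.strictRel S T)
    (hagree : ∀ S T : Coal N, ¬(worst r S ∧ worst r T) → (r.rel S T ↔ r'.rel S T))
    (hij : Psol R r i j) (hji : R r' j i) : ¬ IWS R :=
  fun hIWS => (hIWS r r' i j hr hij hagree).2 hji

section Levels

variable [Fintype N]

lemma classOf_ofRank (f : Coal N → ℕ) (S : Coal N) :
    classOf (ofRank_s16 f) S = Finset.univ.filter fun T => f T = f S := by
  ext T
  simp [classOf]

lemma mem_classOf_self (r : CoalRanking N) (S : Coal N) : S ∈ classOf r S := by
  have hSS : r.rel S S := (r.total S S).elim id id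
  rw [classOf, Finset.mem_filter]
  exact ⟨Finset.mem_univ S, hSS, hSS⟩

variable [DecidableEq N]

lemma card_image_classOf_ofRank (f : Coal N → ℕ) (A : Finset (Coal N)) :
    (A.image (classOf (ofRank_s16 f))).card = (A.image f).card := by
  have hfib : Set.InjOn (fun v => Finset.univ.filter fun T : Coal N => f T = v)
      (A.image f : Set ℕ) := by
    intro v hv w _ hvw
    obtain ⟨T, -, rfl⟩ := Finset.mem_image.mp hv
    simpa using (Finset.ext_iff.mp hvw T)
  rw [← Finset.card_image_of_injOn hfib, Finset.image_image]
  exact congrArg Finset.card (Finset.image_congr fun T _ => classOf_ofRank f T)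

lemma level_lt_numClasses (r : CoalRanking N) (S : Coal N) : level r S < numClasses r := by
  refine Finset.card_lt_card (Finset.ssubset_iff_of_subset ?_ |>.mpr ⟨classOf r S, ?_, ?_⟩)
  · exact Finset.image_subset_image (Finset.filter_subset _ _)
  · exact Finset.mem_image_of_mem _ (Finset.mem_univ S)
  · simp only [Finset.mem_image, Finset.mem_filter, Finset.mem_univ, true_and, not_exists,
      not_and]
    intro T hTS hcl
    have hT := mem_classOf_self r T
    rw [hcl, classOf, Finset.mem_filter] at hT
    exact hTS.2 hT.2.2

lemma level_ofRank (f : Coal N → ℕ) (hf : ∀ S, ∀ v < f S, ∃ T, f T = v) (S : Coal N) :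
    level (ofRank_s16 f) S = f S := by
  have hbelow : (Finset.univ.filter fun T => (ofRank_s16 f).strictRel T S).image f
      = Finset.range (f S) := by
    ext v
    simp only [ofRank_strictRel, Finset.mem_image, Finset.mem_filter, Finset.mem_univ,
      true_and, Finset.mem_range]
    constructor
    · rintro ⟨T, hT, rfl⟩
      exact hT
    · intro hv
      obtain ⟨T, rfl⟩ := hf S v hv
      exact ⟨T, hv, rfl⟩
  rw [level, card_image_classOf_ofRank, hbelow, Finset.card_range]

end Levels

section Solutions

variable [DecidableEq N] [Fintype N] {r : CoalRanking N} {i j x : N} {s k : ℕ}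

lemma theta_eq_zero (h : ∀ S : Coal N, x ∈ S.1 → level r S ≠ k) : theta r x k = 0 := by
  rw [theta, Finset.card_eq_zero, Finset.filter_eq_empty_iff]
  rintro S - ⟨hk, hx⟩
  exact h S hx hk

lemma theta_pos {S : Coal N} (hx : x ∈ S.1) : 0 < theta r x (level r S) :=
  Finset.card_pos.mpr ⟨S, by simp [hx]⟩

lemma Mmat_eq_zero (h : ∀ S : Coal N, S.1.card = s → x ∈ S.1 → level r S ≠ k) :
    Mmat r x s k = 0 := by
  rw [Mmat, Finset.card_eq_zero, Finset.filter_eq_empty_iff]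
  rintro S - ⟨hs, hk, hx⟩
  exact h S hs hx hk

lemma Mmat_pos {S : Coal N} (hx : x ∈ S.1) : 0 < Mmat r x S.1.card (level r S) :=
  Finset.card_pos.mpr ⟨S, by simp [hx]⟩

lemma Mmat_zero_left : Mmat r x 0 k = 0 :=
  Mmat_eq_zero fun S hS _ _ => S.2.card_pos.ne' hS

lemma card_filter_mem_eq (i j : N) :
    (Finset.univ.filter fun S : Coal N => i ∈ S.1).card
      = (Finset.univ.filter fun S : Coal N => j ∈ S.1).card := by
  let σ : Coal N → Coal N := fun S => ⟨S.1.map (Equiv.swap i j).toEmbedding, S.2.map⟩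
  have hσσ : ∀ S, σ (σ S) = S := fun S =>
    Subtype.ext (Finset.ext fun x => by simp [σ])
  refine Finset.card_nbij' σ σ ?_ ?_ (fun S _ => hσσ S) (fun S _ => hσσ S)
  · intro S
    simp [σ]
  · intro S
    simp [σ]

lemma psol_cpSol_iff : Psol cpSol r i j ↔ (Dset r j i).card < (Dset r i j).card := by
  unfold Psol cpSol
  omega

lemma psol_duallexSol_of_lt (heq : ∀ k, s < k → theta r i k = theta r j k)
    (hlt : theta r i s < theta r j s) : Psol duallexSol r i j := by
  refine ⟨Or.inr ⟨s, heq, hlt⟩, ?_⟩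
  rintro (hall | ⟨t, heq', hlt'⟩)
  · exact absurd (hall s) (by omega)
  · rcases lt_trichotomy s t with hst | rfl | hts
    · exact absurd (heq t hst) (by omega)
    · omega
    · exact absurd (heq' s hts) (by omega)

lemma psol_L1starSol_of_lt {shat khat : ℕ} (hs : 1 ≤ shat) (hsn : shat ≤ Fintype.card N)
    (hk : 1 ≤ khat) (hkl : khat < numClasses r)
    (hhigh : ∀ s k, khat < k → Mmat r i s k = Mmat r j s k)
    (hlow : ∀ s, s < shat → Mmat r i s khat = Mmat r j s khat)
    (hlt : Mmat r i shat khat < Mmat r j shat khat) : Psol L1starSol r i j := by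
  refine ⟨Or.inr ⟨shat, khat, hs, hsn, hk, hkl, hhigh, hlow, hlt⟩, ?_⟩
  rintro (hall | ⟨s', k', -, -, -, -, hhigh', hlow', hlt'⟩)
  · exact absurd (hall shat khat) (by omega)
  · rcases lt_trichotomy khat k' with hk' | rfl | hk'
    · exact absurd (hhigh s' k' hk') (by omega)
    · rcases lt_trichotomy shat s' with hs' | rfl | hs'
      · exact absurd (hlow' shat hs') (by omega)
      · omega
      · exact absurd (hlow s' hs') (by omega)
    · exact absurd (hhigh' shat khat hk') (by omega)

end Solutions

section Counterexample

variable [DecidableEq N] {i j k : N}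

def topSingleton (i : N) : CoalRanking N :=
  ofRank_s16 fun S => if S.1 = {i} then 0 else 1

def topSingletonSplit (i j : N) : CoalRanking N :=
  ofRank_s16 fun S => if S.1 = {i} then 0 else if j ∈ S.1 then 1 else 2

lemma worst_topSingleton {S : Coal N} (hS : S.1 ≠ {i}) : worst (topSingleton i) S := by
  intro T
  simp only [topSingleton, ofRank_rel, hS, if_false]
  split_ifs <;> omega

lemma topSingleton_rel_iff (S T : Coal N)
    (h : ¬(worst (topSingleton i) S ∧ worst (topSingleton i) T)) :
    (topSingleton i).rel S T ↔ (topSingletonSplit i j).rel S T := by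
  have hST : S.1 = {i} ∨ T.1 = {i} := by
    by_contra! hne
    exact h ⟨worst_topSingleton hne.1, worst_topSingleton hne.2⟩
  rcases hST with hS | hT
  · simp [topSingleton, topSingletonSplit, hS]
  · simp only [topSingleton, topSingletonSplit, ofRank_rel, hT, if_true]
    split_ifs <;> omega

variable [Fintype N]

lemma level_topSingleton (S : Coal N) :
    level (topSingleton i) S = if S.1 = {i} then 0 else 1 := by
  refine level_ofRank _ (fun S v hv => ⟨⟨{i}, Finset.singleton_nonempty i⟩, ?_⟩) S
  split_ifs at hv <;> simp <;> omega

lemma level_topSingletonSplit (hij : i ≠ j) (S : Coal N) :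
    level (topSingletonSplit i j) S =
      if S.1 = {i} then 0 else if j ∈ S.1 then 1 else 2 := by
  refine level_ofRank _ (fun S v hv => ?_) S
  obtain rfl | rfl : v = 0 ∨ v = 1 := by split_ifs at hv <;> omega
  · exact ⟨⟨{i}, Finset.singleton_nonempty i⟩, by simp⟩
  · exact ⟨⟨{j}, Finset.singleton_nonempty j⟩, by simp [hij.symm]⟩

lemma psol_cpSol_topSingleton (hij : i ≠ j) : Psol cpSol (topSingleton i) i j := by
  have hji : Dset (topSingleton i) j i = ∅ := by
    refine Finset.eq_empty_of_forall_notMem fun S hS => ?_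
    simp [Dset, ins, topSingleton, Finset.eq_singleton_iff_unique_mem, hij.symm] at hS
    split_ifs at hS <;> omega
  have hij' : ∅ ∈ Dset (topSingleton i) i j := by
    simp [Dset, ins, topSingleton, hij.symm]
  rw [psol_cpSol_iff, hji]
  exact Finset.card_pos.mpr ⟨∅, hij'⟩

lemma cpSol_topSingletonSplit (hij : i ≠ j) (hik : i ≠ k) (hjk : j ≠ k) :
    cpSol (topSingletonSplit i j) j i := by
  have hij' : Dset (topSingletonSplit i j) i j ⊆ {∅} := by
    intro S hS
    simp [Dset, ins, topSingletonSplit, Finset.eq_singleton_iff_unique_mem, hij.symm] at hS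
    obtain ⟨hiS, hjS, h⟩ := hS
    simp only [hjS, if_false] at h
    rw [Finset.mem_singleton, Finset.eq_empty_iff_forall_notMem]
    exact fun x hx => absurd (h x hx (by rintro rfl; exact hiS hx)) two_ne_zero
  have hji : {k} ∈ Dset (topSingletonSplit i j) j i := by
    simp [Dset, ins, topSingletonSplit, Finset.eq_singleton_iff_unique_mem, hij.symm, hij,
      hik, hjk, hik.symm]
  calc (Dset (topSingletonSplit i j) i j).card ≤ ({∅} : Finset (Finset N)).card :=
        Finset.card_le_card hij'
    _ ≤ (Dset (topSingletonSplit i j) j i).card := Finset.card_pos.mpr ⟨{k}, hji⟩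

lemma psol_duallexSol_topSingleton (hij : i ≠ j) : Psol duallexSol (topSingleton i) i j := by
  have hhigh : ∀ {l} (x : N), 1 < l → theta (topSingleton i) x l = 0 := fun x hl =>
    theta_eq_zero fun S _ => by rw [level_topSingleton]; split_ifs <;> omega
  refine psol_duallexSol_of_lt (s := 1) (fun l hl => by rw [hhigh i hl, hhigh j hl]) ?_
  have hi : theta (topSingleton i) i 1 = ((Finset.univ.filter fun S : Coal N => i ∈ S.1).erase
      ⟨{i}, Finset.singleton_nonempty i⟩).card := by
    rw [theta]
    congr 1
    ext S
    simp [level_topSingleton, Subtype.ext_iff]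
  have hj : theta (topSingleton i) j 1 = (Finset.univ.filter fun S : Coal N => j ∈ S.1).card := by
    rw [theta]
    congr 1
    ext S
    simp only [level_topSingleton, Finset.mem_filter, Finset.mem_univ, true_and]
    split_ifs with hS <;> simp [hS, hij.symm]
  rw [hi, hj, ← card_filter_mem_eq i j]
  exact Finset.card_erase_lt_of_mem (by simp)

lemma level_topSingletonSplit_pair (hij : i ≠ j) (hik : i ≠ k) (hjk : j ≠ k) :
    level (topSingletonSplit i j) ⟨{i, k}, Finset.insert_nonempty _ _⟩ = 2 := by
  simp [level_topSingletonSplit hij, Finset.eq_singleton_iff_unique_mem, hik.symm, hij.symm,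
    hjk]

lemma duallexSol_topSingletonSplit (hij : i ≠ j) (hik : i ≠ k) (hjk : j ≠ k) :
    duallexSol (topSingletonSplit i j) j i := by
  have hhigh : ∀ {l} (x : N), 2 < l → theta (topSingletonSplit i j) x l = 0 := fun x hl =>
    theta_eq_zero fun S _ => by rw [level_topSingletonSplit hij]; split_ifs <;> omega
  have hj : theta (topSingletonSplit i j) j 2 = 0 :=
    theta_eq_zero fun S hjS => by rw [level_topSingletonSplit hij]; split_ifs <;> simp_all
  have hi := theta_pos (r := topSingletonSplit i j) (S := ⟨{i, k}, Finset.insert_nonempty _ _⟩)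
    (Finset.mem_insert_self i {k})
  rw [level_topSingletonSplit_pair hij hik hjk] at hi
  exact (psol_duallexSol_of_lt (s := 2) (fun l hl => by rw [hhigh i hl, hhigh j hl])
    (by omega)).1

lemma psol_L1starSol_topSingleton (hij : i ≠ j) : Psol L1starSol (topSingleton i) i j := by
  have hj := Mmat_pos (r := topSingleton i) (S := ⟨{j}, Finset.singleton_nonempty j⟩)
    (Finset.mem_singleton_self j)
  have hclasses := level_lt_numClasses (topSingleton i) ⟨{j}, Finset.singleton_nonempty j⟩
  simp only [level_topSingleton, Finset.singleton_inj, hij.symm, if_false,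
    Finset.card_singleton] at hj hclasses
  have hi : Mmat (topSingleton i) i 1 1 = 0 := by
    refine Mmat_eq_zero fun S hS hiS => ?_
    obtain ⟨a, ha⟩ := Finset.card_eq_one.mp hS
    obtain rfl : i = a := by simpa [ha] using hiS
    simp [level_topSingleton, ha]
  have hhigh : ∀ (x : N) (s k : ℕ), 1 < k → Mmat (topSingleton i) x s k = 0 :=
    fun x s k hk => Mmat_eq_zero fun S _ _ => by rw [level_topSingleton]; split_ifs <;> omega
  refine psol_L1starSol_of_lt le_rfl (Fintype.card_pos_iff.mpr ⟨i⟩) le_rfl hclasses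
    (fun s k hk => by rw [hhigh i s k hk, hhigh j s k hk]) (fun s hs => ?_) (by omega)
  obtain rfl : s = 0 := by omega
  rw [Mmat_zero_left, Mmat_zero_left]

lemma L1starSol_topSingletonSplit (hij : i ≠ j) (hik : i ≠ k) (hjk : j ≠ k) :
    L1starSol (topSingletonSplit i j) j i := by
  have hi := Mmat_pos (r := topSingletonSplit i j) (S := ⟨{i, k}, Finset.insert_nonempty _ _⟩)
    (Finset.mem_insert_self i {k})
  have hclasses :=
    level_lt_numClasses (topSingletonSplit i j) ⟨{i, k}, Finset.insert_nonempty _ _⟩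
  rw [level_topSingletonSplit_pair hij hik hjk] at hi hclasses
  have hj : ∀ s, Mmat (topSingletonSplit i j) j s 2 = 0 := fun s =>
    Mmat_eq_zero fun S _ hjS => by rw [level_topSingletonSplit hij]; split_ifs <;> simp_all
  have hi1 : Mmat (topSingletonSplit i j) i 1 2 = 0 := by
    refine Mmat_eq_zero fun S hS hiS => ?_
    obtain ⟨a, ha⟩ := Finset.card_eq_one.mp hS
    obtain rfl : i = a := by simpa [ha] using hiS
    simp [level_topSingletonSplit hij, ha]
  have hhigh : ∀ (x : N) (s l : ℕ), 2 < l → Mmat (topSingletonSplit i j) x s l = 0 :=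
    fun x s l hl => Mmat_eq_zero fun S _ _ => by
      rw [level_topSingletonSplit hij]; split_ifs <;> omega
  have hcard : 2 ≤ Fintype.card N := by
    simpa [Finset.card_pair hik] using Finset.card_le_univ {i, k}
  refine (psol_L1starSol_of_lt (shat := 2) (khat := 2) (by omega) hcard (by omega) hclasses
    (fun s l hl => by rw [hhigh i s l hl, hhigh j s l hl]) (fun s hs => ?_) ?_).1
  · obtain rfl | rfl : s = 0 ∨ s = 1 := by omega
    · rw [Mmat_zero_left, Mmat_zero_left]
    · rw [hj, hi1]
  · rw [hj]
    simpa [Finset.card_pair hik] using hi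

end Counterexample

section Defs

variable [DecidableEq N] [Fintype N]

/-- if `|N| ≥ 3`, none of the CP-majority, the dual-lex and the `L⁽¹⁾_*`
solution satisfies Independence from the Worst Set. -/
theorem stmt16 (h : 3 ≤ Fintype.card N) :
    ¬ IWS (cpSol : Sol N) ∧ ¬ IWS (duallexSol : Sol N) ∧ ¬ IWS (L1starSol : Sol N) := by
  obtain ⟨i, j, k, hij, hik, hjk⟩ := Fintype.two_lt_card_iff.mp h
  have hr : ∃ S T, (topSingleton i).strictRel S T :=
    ⟨⟨{i}, Finset.singleton_nonempty i⟩, ⟨{j}, Finset.singleton_nonempty j⟩,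
      by simp [topSingleton, hij.symm]⟩
  have hagree := topSingleton_rel_iff (i := i) (j := j)
  exact ⟨not_IWS_of_reversal hr hagree (psol_cpSol_topSingleton hij)
      (cpSol_topSingletonSplit hij hik hjk),
    not_IWS_of_reversal hr hagree (psol_duallexSol_topSingleton hij)
      (duallexSol_topSingletonSplit hij hik hjk),
    not_IWS_of_reversal hr hagree (psol_L1starSol_topSingleton hij)
      (L1starSol_topSingletonSplit hij hik hjk)⟩

end Defs

end SocialRanking
end
end

section
/- If |N| ≥ 4, none of the CP-majority R_CP, the lex-cel R_le and the dual-lex R_d satisfies k-Desirability on Dichotomous rankings (k-DD). -/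
open scoped Classical

noncomputable section

namespace SocialRanking

variable {N : Type*}

/-! Take the dichotomous ranking whose best class consists of `{i}` and the pairs `{j, x}` with
`x ∉ {i, j}`. Then `i` 0-dominates `j` (through `{i} ≻ {j}`), `j` 1-dominates `i` (through
`{j, x} ≻ {i, x}`), and all larger coalitions tie in the worst class, so k-DD demands `i ≻ j`.
Yet `j` beats `i` on the `n - 2 ≥ 2` singletons while `i` beats `j` only on `∅` (CP-majority),
`j` lies in `n - 2` best coalitions against one for `i` (lex-cel), and since both lie in the
same number of coalitions, `i` lies in more worst coalitions than `j` (dual-lex). -/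

namespace CoalRanking

def ofBest (B : Set (Coal N)) : CoalRanking N where
  rel S T := T ∈ B → S ∈ B
  total S T := by tauto
  trans S T U := by tauto

variable {B : Set (Coal N)} {S T : Coal N}

@[simp]
lemma ofBest_rel : (ofBest B).rel S T ↔ (T ∈ B → S ∈ B) := Iff.rfl

@[simp]
lemma ofBest_strictRel : (ofBest B).strictRel S T ↔ S ∈ B ∧ T ∉ B := by
  simp only [strictRel, ofBest_rel]; tauto

@[simp]
lemma ofBest_simRel : (ofBest B).simRel S T ↔ (S ∈ B ↔ T ∈ B) := by
  simp only [simRel, ofBest_rel]; tauto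

end CoalRanking

open CoalRanking Finset

lemma dichotomous_ofBest {B : Set (Coal N)} {S T : Coal N} (hS : S ∈ B) (hT : T ∉ B) :
    dichotomous (ofBest B) :=
  ⟨⟨S, T, ofBest_strictRel.mpr ⟨hS, hT⟩⟩, fun U =>
    (em (U ∈ B)).imp (fun hU _ _ => hU) fun hU _ h => absurd h hU⟩

section Finite

variable [DecidableEq N]

lemma kDomS.asymm {r : CoalRanking N} {i j : N} {k : ℕ} (h : kDomS r i j k) :
    ¬ kDomS r j i k := by
  obtain ⟨-, S, hiS, hjS, hk, -, hlt⟩ := h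
  rintro ⟨hall, -⟩
  exact hlt (hall S hjS hiS hk)

def singletonAndPairs (i j : N) : Set (Coal N) :=
  {S | S.1 = {i} ∨ (#S.1 = 2 ∧ j ∈ S.1 ∧ i ∉ S.1)}

section SingletonAndPairs

variable {i j x : N} {S : Finset N}

lemma ins_empty_mem_singletonAndPairs : ins i ∅ ∈ singletonAndPairs i j :=
  Or.inl rfl

lemma ins_left_mem_singletonAndPairs (hiS : i ∉ S) :
    ins i S ∈ singletonAndPairs i j ↔ S = ∅ := by
  simp only [singletonAndPairs, ins, Set.mem_ofPred_eq, mem_insert_self, not_true_eq_false,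
    and_false, or_false]
  constructor
  · intro h
    rw [← erase_insert hiS, h, erase_singleton]
  · rintro rfl
    rfl

lemma ins_right_mem_singletonAndPairs (hij : i ≠ j) (hiS : i ∉ S) (hjS : j ∉ S) :
    ins j S ∈ singletonAndPairs i j ↔ #S = 1 := by
  have hne : insert j S ≠ {i} := fun h => hij (mem_singleton.mp (h ▸ mem_insert_self j S)).symm
  simp [singletonAndPairs, ins, hne, card_insert_of_notMem hjS, hij, hiS]

lemma ofBest_singletonAndPairs_strictRel_ins_singleton (hij : i ≠ j) (hxi : x ≠ i)
    (hxj : x ≠ j) : (ofBest (singletonAndPairs i j)).strictRel (ins j {x}) (ins i {x}) := by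
  have hiS : i ∉ ({x} : Finset N) := notMem_singleton.mpr hxi.symm
  have hjS : j ∉ ({x} : Finset N) := notMem_singleton.mpr hxj.symm
  exact ofBest_strictRel.mpr
    ⟨(ins_right_mem_singletonAndPairs hij hiS hjS).mpr (card_singleton x),
      mt (ins_left_mem_singletonAndPairs hiS).mp (singleton_ne_empty x)⟩

end SingletonAndPairs

variable [Fintype N]

section OfBest

variable {B : Set (Coal N)}

lemma level_ofBest (hB : B.Nonempty) (S : Coal N) :
    level (ofBest B) S = if S ∈ B then 0 else 1 := by
  obtain ⟨T₀, hT₀⟩ := hB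
  unfold level
  split_ifs with hS
  · simp [hS]
  · rw [card_eq_one]
    refine ⟨classOf (ofBest B) T₀, ?_⟩
    ext C
    simp only [mem_image, mem_filter, mem_univ, true_and, mem_singleton, ofBest_strictRel, hS,
      not_false_eq_true, and_true]
    constructor
    · rintro ⟨T, hT, rfl⟩
      ext U
      simp [classOf, hT, hT₀]
    · rintro rfl
      exact ⟨T₀, hT₀, rfl⟩

lemma theta_ofBest (hB : B.Nonempty) (x : N) (k : ℕ) :
    theta (ofBest B) x k = #{S : Coal N | (if S ∈ B then 0 else 1) = k ∧ x ∈ S.1} := by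
  simp only [theta, level_ofBest hB]

lemma theta_ofBest_zero (hB : B.Nonempty) (x : N) :
    theta (ofBest B) x 0 = #{S : Coal N | S ∈ B ∧ x ∈ S.1} := by
  simp [theta_ofBest hB]

lemma theta_ofBest_of_two_le (hB : B.Nonempty) (x : N) {k : ℕ} (hk : 2 ≤ k) :
    theta (ofBest B) x k = 0 := by
  rw [theta_ofBest hB, card_eq_zero, filter_eq_empty_iff]
  intro S _ ⟨hS, _⟩
  split_ifs at hS <;> omega

lemma theta_ofBest_zero_add_one (hB : B.Nonempty) (x : N) :
    theta (ofBest B) x 0 + theta (ofBest B) x 1 = #{S : Coal N | x ∈ S.1} := by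
  rw [← card_filter_add_card_filter_not (s := {S : Coal N | x ∈ S.1}) (· ∈ B),
    filter_filter, filter_filter, theta_ofBest hB, theta_ofBest hB]
  congr 2 <;> ext S <;> by_cases hS : S ∈ B <;> simp [hS]

end OfBest

lemma card_filter_mem_coal (i j : N) :
    #{S : Coal N | i ∈ S.1} = #{S : Coal N | j ∈ S.1} :=
  card_equiv (Equiv.subtypeEquiv (Equiv.finsetCongr (Equiv.swap i j)) fun S => by simp)
    fun S => by simp

lemma duallexSol_ofBest_of_theta_zero_lt {B : Set (Coal N)} (hB : B.Nonempty) {i j : N}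
    (h : theta (ofBest B) i 0 < theta (ofBest B) j 0) : duallexSol (ofBest B) j i := by
  have hi := theta_ofBest_zero_add_one hB i
  have hj := theta_ofBest_zero_add_one hB j
  rw [card_filter_mem_coal i j] at hi
  refine Or.inr ⟨1, fun k hk => ?_, by omega⟩
  rw [theta_ofBest_of_two_le hB _ hk, theta_ofBest_of_two_le hB _ hk]

lemma kDD.psol_of_kDomS_zero_of_kDomS_one {R : Sol N} (hR : kDD R) {r : CoalRanking N}
    {i j : N} (hn : 2 < Fintype.card N) (hr : dichotomous r) (h₀ : kDomS r i j 0)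
    (h₁ : kDomS r j i 1) (hI : ∀ k, 2 ≤ k → kIndiff r i j k) : Psol R r i j := by
  have mem_KP {a b : N} {k : ℕ} (hk : kDomS r a b k) (hkn : k < Fintype.card N - 1) :
      k ∈ KP r a b :=
    mem_filter.mpr ⟨mem_range.mpr hkn, hk⟩
  have hKP₀ : 0 ∈ KP r i j := mem_KP h₀ (by omega)
  have hKP₁ : 1 ∈ KP r j i := mem_KP h₁ (by omega)
  refine hR r i j hr (fun k _ => ?_) ⟨0, hKP₀⟩ ⟨1, hKP₁⟩ ?_
  · match k with
    | 0 => exact Or.inl h₀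
    | 1 => exact Or.inr (Or.inl h₁)
    | k + 2 => exact Or.inr (Or.inr (hI _ (by omega)))
  · have hij : (KP r i j).min' ⟨0, hKP₀⟩ ≤ 0 := min'_le _ _ hKP₀
    have hji : (KP r j i).min' ⟨1, hKP₁⟩ ≠ 0 := fun h =>
      h₀.asymm (mem_filter.mp (h ▸ min'_mem (KP r j i) ⟨1, hKP₁⟩)).2
    omega

section SingletonAndPairs

variable {i j x y : N}

lemma kDD.psol_ofBest_singletonAndPairs {R : Sol N} (hR : kDD R) (hij : i ≠ j) (hxi : x ≠ i)
    (hxj : x ≠ j) : Psol R (ofBest (singletonAndPairs i j)) i j := by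
  have hj₀ : ins j ∅ ∉ singletonAndPairs i j := by
    rw [ins_right_mem_singletonAndPairs hij (notMem_empty i) (notMem_empty j)]
    simp
  refine hR.psol_of_kDomS_zero_of_kDomS_one
    (Fintype.two_lt_card_iff.mpr ⟨i, j, x, hij, hxi.symm, hxj.symm⟩)
    (dichotomous_ofBest ins_empty_mem_singletonAndPairs hj₀) ⟨?_, ?_⟩ ⟨?_, ?_⟩ ?_
  · intro S hiS _ hS _
    exact (ins_left_mem_singletonAndPairs hiS).mpr (card_eq_zero.mp hS)
  · exact ⟨∅, notMem_empty i, notMem_empty j, card_empty,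
      ofBest_strictRel.mpr ⟨ins_empty_mem_singletonAndPairs, hj₀⟩⟩
  · intro S hjS hiS hS _
    exact (ins_right_mem_singletonAndPairs hij hiS hjS).mpr hS
  · exact ⟨{x}, notMem_singleton.mpr hxj.symm, notMem_singleton.mpr hxi.symm, card_singleton x,
      ofBest_singletonAndPairs_strictRel_ins_singleton hij hxi hxj⟩
  · intro k hk S hiS hjS hS
    refine ofBest_simRel.mpr (iff_of_false ?_ ?_)
    · rw [ins_left_mem_singletonAndPairs hiS]
      rintro rfl
      simp at hS
      omega
    · rw [ins_right_mem_singletonAndPairs hij hiS hjS]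
      omega

lemma cpSol_ofBest_singletonAndPairs (hij : i ≠ j) (hxi : x ≠ i) (hxj : x ≠ j) :
    cpSol (ofBest (singletonAndPairs i j)) j i := by
  have hDij : Dset (ofBest (singletonAndPairs i j)) i j ⊆ {∅} := by
    intro S hS
    simp only [Dset, mem_filter, mem_univ, true_and, ofBest_strictRel] at hS
    exact mem_singleton.mpr ((ins_left_mem_singletonAndPairs hS.1).mp hS.2.2.1)
  have hDji : {x} ∈ Dset (ofBest (singletonAndPairs i j)) j i :=
    mem_filter.mpr ⟨mem_univ _, notMem_singleton.mpr hxj.symm, notMem_singleton.mpr hxi.symm,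
      ofBest_singletonAndPairs_strictRel_ins_singleton hij hxi hxj⟩
  calc #(Dset _ i j) ≤ 1 := (card_le_card hDij).trans_eq (card_singleton _)
    _ ≤ #(Dset _ j i) := card_pos.mpr ⟨_, hDji⟩

lemma theta_ofBest_singletonAndPairs_zero_lt (hij : i ≠ j) (hxi : x ≠ i) (hxj : x ≠ j)
    (hyi : y ≠ i) (hyj : y ≠ j) (hxy : x ≠ y) :
    theta (ofBest (singletonAndPairs i j)) i 0 < theta (ofBest (singletonAndPairs i j)) j 0 := by
  rw [theta_ofBest_zero ⟨_, ins_empty_mem_singletonAndPairs⟩,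
    theta_ofBest_zero ⟨_, ins_empty_mem_singletonAndPairs⟩]
  have hi : #{S : Coal N | S ∈ singletonAndPairs i j ∧ i ∈ S.1} ≤ 1 := by
    have eq_singleton (S : Coal N) (hS : S ∈ singletonAndPairs i j ∧ i ∈ S.1) : S.1 = {i} := by
      obtain ⟨hS | ⟨-, -, hiS⟩, hmem⟩ := hS
      exacts [hS, absurd hmem hiS]
    refine card_le_one.mpr fun S hS T hT => Subtype.ext ?_
    rw [eq_singleton S (mem_filter.mp hS).2, eq_singleton T (mem_filter.mp hT).2]
  have hj : 1 < #{S : Coal N | S ∈ singletonAndPairs i j ∧ j ∈ S.1} := by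
    have mem (z : N) (hzi : z ≠ i) (hzj : z ≠ j) :
        ins j {z} ∈ ({S : Coal N | S ∈ singletonAndPairs i j ∧ j ∈ S.1} : Finset _) :=
      mem_filter.mpr ⟨mem_univ _,
        (ofBest_strictRel.mp (ofBest_singletonAndPairs_strictRel_ins_singleton hij hzi hzj)).1,
        mem_insert_self j _⟩
    refine one_lt_card.mpr ⟨_, mem x hxi hxj, _, mem y hyi hyj, fun h => ?_⟩
    simpa [ins, hxj, hxy] using congrArg (x ∈ ·.1) h
  omega

end SingletonAndPairs

/-- if `|N| ≥ 4`, none of the CP-majority, the lex-cel and the dual-lex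
satisfies k-Desirability on Dichotomous rankings. -/
theorem stmt18 (h : 4 ≤ Fintype.card N) :
    ¬ kDD (cpSol : Sol N) ∧ ¬ kDD (lexcelSol : Sol N) ∧ ¬ kDD (duallexSol : Sol N) := by
  obtain ⟨t, -, ht⟩ := le_card_iff_exists_subset_card.mp (h.trans_eq card_univ.symm)
  obtain ⟨i, j, x, y, hij, hix, hiy, hjx, hjy, hxy, -⟩ := card_eq_four.mp ht
  have hθ := theta_ofBest_singletonAndPairs_zero_lt hij hix.symm hjx.symm hiy.symm hjy.symm hxy
  have not_swap {R : Sol N} (hR : kDD R) : ¬ R (ofBest (singletonAndPairs i j)) j i :=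
    (hR.psol_ofBest_singletonAndPairs hij hix.symm hjx.symm).2
  exact ⟨fun hR => not_swap hR (cpSol_ofBest_singletonAndPairs hij hix.symm hjx.symm),
    fun hR => not_swap hR (Or.inr ⟨0, nofun, hθ⟩),
    fun hR => not_swap hR
      (duallexSol_ofBest_of_theta_zero_lt ⟨_, ins_empty_mem_singletonAndPairs⟩ hθ)⟩

end Finite

end SocialRanking
end
end
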